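/- arXiv:2602.14455 — 6 statements merged into one kernel-verified Lean document; each statement's English description precedes it below -/
import Mathlib

section
/- Fix reals s and y₀, and let U₀, U₁, …, U_h be i.i.d. standard Gaussian random variables. For δ ∈ ℝ, let Y_h(δ) denote the value y_h produced by the QAR(1,1) recursion started at s₋₁ = s, y₋₁ = y₀ with inputs u₀ = U₀ + δ and u_k = U_k for 1 ≤ k ≤ h. Then for every δ ∈ ℝ, E[Y_h(δ) − Y_h(0)] = σ φ₁^h δ + a_h s δ + q_h δ². (This is the conditional average response of the QAR(1,1) model: a baseline effect σφ₁^h δ, a state-dependent effect a_h s δ, and a higher-order effect q_h δ².) -/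
open MeasureTheory ProbabilityTheory

/-- The state process of the QAR(1,1) recursion:
`s k = φ₁ * s (k-1) + σ * u k`, started at `s (-1) = sInit`. -/
def qarS (φ1 σ : ℝ) (sInit : ℝ) (u : ℕ → ℝ) : ℕ → ℝ
  | 0 => φ1 * sInit + σ * u 0
  | k + 1 => φ1 * qarS φ1 σ sInit u k + σ * u (k + 1)

/-- The outcome process of the QAR(1,1) recursion:
`y k = φ₁ * y (k-1) + φ₂ * (s (k-1))^2 + (1 + γ * s (k-1)) * σ * u k`,
started at `s (-1) = sInit`, `y (-1) = yInit`. -/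
def qarY (φ1 φ2 γ σ : ℝ) (sInit yInit : ℝ) (u : ℕ → ℝ) : ℕ → ℝ
  | 0 => φ1 * yInit + φ2 * sInit ^ 2 + (1 + γ * sInit) * σ * u 0
  | k + 1 => φ1 * qarY φ1 φ2 γ σ sInit yInit u k
      + φ2 * (qarS φ1 σ sInit u k) ^ 2
      + (1 + γ * qarS φ1 σ sInit u k) * σ * u (k + 1)

/-! Perturbing `u₀` by `δ` shifts every state deterministically, `s_k ↦ s_k + σ φ₁^k δ`, so the
quadratic terms `φ₂ s_k²` change by an amount affine in `s_k`: the response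
`Y_h(δ) - Y_h(0)` is an affine function of the shocks. Its expectation is therefore its value at
the mean shocks `0`, which obeys a linear recursion in `h` solved by geometric sums. -/

section

variable {Ω : Type*} [MeasurableSpace Ω] {P : Measure Ω} {U : ℕ → Ω → ℝ} {f g : (ℕ → ℝ) → ℝ}

def IntegralCommutes (P : Measure Ω) (U : ℕ → Ω → ℝ) (f : (ℕ → ℝ) → ℝ) : Prop :=
  Integrable (fun ω => f fun j => U j ω) P ∧
    ∫ ω, f (fun j => U j ω) ∂P = f fun j => ∫ ω, U j ω ∂P

namespace IntegralCommutes

lemma const [IsProbabilityMeasure P] (c : ℝ) : IntegralCommutes P U fun _ => c :=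
  ⟨integrable_const c, by simp⟩

lemma eval {j : ℕ} (hj : Integrable (U j) P) : IntegralCommutes P U fun u => u j :=
  ⟨hj, rfl⟩

lemma add (hf : IntegralCommutes P U f) (hg : IntegralCommutes P U g) :
    IntegralCommutes P U fun u => f u + g u :=
  ⟨hf.1.add hg.1, by rw [integral_add hf.1 hg.1, hf.2, hg.2]⟩

lemma const_mul (hf : IntegralCommutes P U f) (c : ℝ) :
    IntegralCommutes P U fun u => c * f u :=
  ⟨hf.1.const_mul c, by rw [integral_const_mul, hf.2]⟩

end IntegralCommutes

end

def qarResponse (φ1 φ2 γ σ sInit yInit δ : ℝ) (u : ℕ → ℝ) (k : ℕ) : ℝ :=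
  qarY φ1 φ2 γ σ sInit yInit (fun j => if j = 0 then u 0 + δ else u j) k
    - qarY φ1 φ2 γ σ sInit yInit u k

section QAR

variable {φ1 φ2 γ σ sInit yInit δ : ℝ}

lemma qarS_perturb (u : ℕ → ℝ) (k : ℕ) :
    qarS φ1 σ sInit (fun j => if j = 0 then u 0 + δ else u j) k
      = qarS φ1 σ sInit u k + σ * φ1 ^ k * δ := by
  induction k with
  | zero => simp only [qarS, if_pos]; ring
  | succ k ih => rw [qarS, qarS, ih, if_neg k.succ_ne_zero]; ring

lemma qarS_zero_input (k : ℕ) : qarS φ1 σ sInit 0 k = φ1 ^ (k + 1) * sInit := by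
  induction k with
  | zero => simp [qarS]
  | succ k ih => rw [qarS, ih, Pi.zero_apply]; ring

lemma qarResponse_zero (u : ℕ → ℝ) :
    qarResponse φ1 φ2 γ σ sInit yInit δ u 0 = (1 + γ * sInit) * σ * δ := by
  simp only [qarResponse, qarY, if_pos]
  ring

lemma qarResponse_succ (u : ℕ → ℝ) (k : ℕ) :
    qarResponse φ1 φ2 γ σ sInit yInit δ u (k + 1)
      = φ1 * qarResponse φ1 φ2 γ σ sInit yInit δ u k
        + 2 * φ2 * σ * φ1 ^ k * δ * qarS φ1 σ sInit u k
        + γ * σ ^ 2 * φ1 ^ k * δ * u (k + 1)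
        + φ2 * (σ * φ1 ^ k * δ) ^ 2 := by
  rw [qarResponse, qarResponse, qarY, qarY, qarS_perturb, if_neg k.succ_ne_zero]
  ring

variable {Ω : Type*} [MeasurableSpace Ω] {P : Measure Ω} {U : ℕ → Ω → ℝ}

lemma integralCommutes_qarS [IsProbabilityMeasure P] (hU : ∀ j, Integrable (U j) P) (k : ℕ) :
    IntegralCommutes P U fun u => qarS φ1 σ sInit u k := by
  induction k with
  | zero => exact (IntegralCommutes.const _).add ((IntegralCommutes.eval (hU 0)).const_mul σ)
  | succ k ih => exact (ih.const_mul φ1).add ((IntegralCommutes.eval (hU (k + 1))).const_mul σ)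

lemma integralCommutes_qarResponse [IsProbabilityMeasure P] (hU : ∀ j, Integrable (U j) P)
    (k : ℕ) : IntegralCommutes P U fun u => qarResponse φ1 φ2 γ σ sInit yInit δ u k := by
  induction k with
  | zero =>
    simp only [qarResponse_zero]
    exact IntegralCommutes.const _
  | succ k ih =>
    simp only [qarResponse_succ]
    exact (((ih.const_mul _).add ((integralCommutes_qarS hU k).const_mul _)).add
      ((IntegralCommutes.eval (hU (k + 1))).const_mul _)).add (IntegralCommutes.const _)

lemma qarResponse_zero_input_succ (n : ℕ) :
    (1 - φ1) * qarResponse φ1 φ2 γ σ sInit yInit δ 0 (n + 1)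
      = (1 - φ1) * σ * φ1 ^ (n + 1) * δ * (1 + γ * sInit)
        + 2 * φ2 * σ * φ1 ^ (n + 1) * (1 - φ1 ^ (n + 1)) * sInit * δ
        + φ2 * σ ^ 2 * (φ1 ^ n - φ1 ^ (2 * n + 1)) * δ ^ 2 := by
  induction n with
  | zero =>
    rw [qarResponse_succ, qarResponse_zero, qarS_zero_input, Pi.zero_apply]
    ring
  | succ n ih =>
    rw [qarResponse_succ, qarS_zero_input, Pi.zero_apply]
    linear_combination φ1 * ih

-- At `h = 0` the truncated exponents `h - 1 = 2 * h - 1 = 0` make the `δ ^ 2` coefficient vanish.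
lemma qarResponse_zero_input (hφ1 : φ1 ≠ 1) (h : ℕ) :
    qarResponse φ1 φ2 γ σ sInit yInit δ 0 h
      = σ * φ1 ^ h * δ
        + (σ * φ1 ^ h * (γ + 2 * φ2 * (1 - φ1 ^ h) / (1 - φ1))) * sInit * δ
        + (φ2 * σ ^ 2 * (φ1 ^ (h - 1) - φ1 ^ (2 * h - 1)) / (1 - φ1)) * δ ^ 2 := by
  have hφ1' : 1 - φ1 ≠ 0 := sub_ne_zero.mpr hφ1.symm
  rcases h with _ | n
  · simp only [qarResponse_zero]
    ring
  · rw [← mul_right_inj' hφ1', qarResponse_zero_input_succ, Nat.add_sub_cancel,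
      show 2 * (n + 1) - 1 = 2 * n + 1 by omega]
    field_simp
    ring

end QAR

theorem qar_conditional_average_response_general
    {Ω : Type*} [MeasurableSpace Ω] (P : Measure Ω) [IsProbabilityMeasure P]
    (φ1 φ2 γ σ : ℝ) (hφ1 : |φ1| < 1) (h : ℕ)
    (s y0 : ℝ)
    (U : ℕ → Ω → ℝ)
    (hUdist : ∀ k, Measure.map (U k) P = gaussianReal 0 1)
    (δ : ℝ) :
    ∫ ω, (qarY φ1 φ2 γ σ s y0 (fun k => if k = 0 then U 0 ω + δ else U k ω) h
          - qarY φ1 φ2 γ σ s y0 (fun k => U k ω) h) ∂P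
      = σ * φ1 ^ h * δ
        + (σ * φ1 ^ h * (γ + 2 * φ2 * (1 - φ1 ^ h) / (1 - φ1))) * s * δ
        + (φ2 * σ ^ 2 * (φ1 ^ (h - 1) - φ1 ^ (2 * h - 1)) / (1 - φ1)) * δ ^ 2 := by
  -- `Measure.map` along a map that is not a.e.-measurable is `0`
  have hlaw (k : ℕ) : HasLaw (U k) (gaussianReal 0 1) P :=
    ⟨.of_map_ne_zero (hUdist k ▸ IsProbabilityMeasure.ne_zero _), hUdist k⟩
  have hmean : (fun k => ∫ ω, U k ω ∂P) = 0 := funext fun k => by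
    rw [(hlaw k).integral_eq, integral_id_gaussianReal, Pi.zero_apply]
  have hresponse : IntegralCommutes P U fun u => qarResponse φ1 φ2 γ σ s y0 δ u h :=
    integralCommutes_qarResponse (fun k => (hlaw k).hasGaussianLaw.integrable) h
  calc _ = qarResponse φ1 φ2 γ σ s y0 δ (fun k => ∫ ω, U k ω ∂P) h := hresponse.2
    _ = qarResponse φ1 φ2 γ σ s y0 δ 0 h := by rw [hmean]
    _ = _ := qarResponse_zero_input (abs_lt.mp hφ1).2.ne h

/-- For fixed initial values `s, y₀` and i.i.d. standard Gaussian shocks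
`U 0, …, U h`, the conditional average response of the QAR(1,1) model at horizon `h` —
the expected difference between the outcome produced with the perturbed shock `U 0 + δ`
and the outcome produced with the baseline shock `U 0` — equals
`σ φ₁^h δ + a_h s δ + q_h δ²`, where
`a_h = σ φ₁^h (γ + 2 φ₂ (1 - φ₁^h)/(1 - φ₁))` and
`q_h = φ₂ σ² (φ₁^(h-1) - φ₁^(2h-1))/(1 - φ₁)`. -/
theorem qar_conditional_average_response
    {Ω : Type*} [MeasurableSpace Ω] (P : Measure Ω) [IsProbabilityMeasure P]
    (φ1 φ2 γ σ : ℝ) (hφ1 : |φ1| < 1) (h : ℕ) (hh : 1 ≤ h)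
    (s y0 : ℝ)
    (U : ℕ → Ω → ℝ)
    (hUmeas : ∀ k, Measurable (U k))
    (hUdist : ∀ k, Measure.map (U k) P = gaussianReal 0 1)
    (hUindep : iIndepFun U P)
    (δ : ℝ) :
    ∫ ω, (qarY φ1 φ2 γ σ s y0 (fun k => if k = 0 then U 0 ω + δ else U k ω) h
          - qarY φ1 φ2 γ σ s y0 (fun k => U k ω) h) ∂P
      = σ * φ1 ^ h * δ
        + (σ * φ1 ^ h * (γ + 2 * φ2 * (1 - φ1 ^ h) / (1 - φ1))) * s * δ
        + (φ2 * σ ^ 2 * (φ1 ^ (h - 1) - φ1 ^ (2 * h - 1)) / (1 - φ1)) * δ ^ 2 :=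
  qar_conditional_average_response_general P φ1 φ2 γ σ hφ1 h s y0 U hUdist δ
end

section
/- Let Y₋ and S₋ be random variables on a probability space with E[S₋] = 0, E[S₋²] < ∞ and E[|Y₋|] < ∞, and let U₀, U₁, …, U_h be i.i.d. standard Gaussian random variables independent of the pair (Y₋, S₋). Let y_h be the random variable produced by the QAR(1,1) recursion started at s₋₁ = S₋, y₋₁ = Y₋ with inputs u_k = U_k for 0 ≤ k ≤ h. Then E[y_h · U₀] = σ φ₁^h. In particular, the population coefficient of a linear local projection of y_h on the observed shock U₀, namely E[y_h U₀]/Var(U₀), equals σ φ₁^h, the impulse response that would obtain if the data were generated by the linear AR(1) model y_t = φ₁ y_{t−1} + σ u_t; the linear local projection thus captures none of the nonlinearity of the QAR(1,1) model. -/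
/-!
Multiplying the recursion for `y` by `U₀` gives
`E[y_{k+1} U₀] = φ₁ E[y_k U₀] + φ₂ E[s_k² U₀] + σ E[U_{k+1} U₀] + γσ E[s_k U_{k+1} U₀]`.
Since `s_k` is a linear combination of `S₋` and the shocks, the two nonlinear terms are sums of
mixed third moments `E[X Z U₀]` with `X, Z ∈ {S₋, U_j}`. Each of these vanishes: independence
factors out a centered variable (`S₋` or a shock), except for `E[U₀³]`, which vanishes because
the Gaussian law is symmetric. Hence `E[y_k U₀] - σ φ₁^k E[U₀²]` is zero for every `k`.
-/

open MeasureTheory ProbabilityTheory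

open scoped NNReal ENNReal

namespace ProbabilityTheory

section GaussianMoments

variable {Ω : Type*} [MeasurableSpace Ω] {P : Measure Ω} {X : Ω → ℝ} {μ : ℝ} {v : ℝ≥0}

lemma integral_pow_gaussianReal_zero_of_odd {n : ℕ} (hn : Odd n) :
    ∫ x, x ^ n ∂gaussianReal 0 v = 0 := by
  have h := integral_map (μ := gaussianReal 0 v) (φ := fun x : ℝ => -x) (by fun_prop)
    (f := fun x => x ^ n) (by fun_prop)
  rw [gaussianReal_map_neg, neg_zero] at h
  simp only [hn.neg_pow, integral_neg] at h
  linarith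

lemma integral_sq_gaussianReal_zero : ∫ x, x ^ 2 ∂gaussianReal 0 v = v :=
  (variance_of_integral_eq_zero aemeasurable_id' (by simp)).symm.trans
    variance_fun_id_gaussianReal

lemma HasLaw.integrable_pow_of_gaussianReal (hX : HasLaw X (gaussianReal μ v) P) (n : ℕ) :
    Integrable (fun ω => X ω ^ n) P := by
  have h := integrable_pow_of_mem_interior_integrableExpSet (X := fun x : ℝ => x)
    (μ := gaussianReal μ v) (by simp) n
  rw [← hX.map_eq] at h
  exact (integrable_map_measure (g := fun x : ℝ => x ^ n) (by fun_prop) hX.aemeasurable).mp h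

lemma HasLaw.memLp_of_gaussianReal (hX : HasLaw X (gaussianReal μ v) P) {p : ℝ≥0∞}
    (hp : p ≠ ⊤) : MemLp X p P := by
  have h := memLp_id_gaussianReal' (μ := μ) (v := v) p hp
  rw [← hX.map_eq] at h
  exact (memLp_map_measure_iff (by fun_prop) hX.aemeasurable).mp h

lemma HasLaw.integrable_mul_of_gaussianReal {Y : Ω → ℝ} {μ' : ℝ} {v' : ℝ≥0}
    (hX : HasLaw X (gaussianReal μ v) P) (hY : HasLaw Y (gaussianReal μ' v') P) :
    Integrable (X * Y) P :=
  (hX.memLp_of_gaussianReal (p := 2) (by simp)).integrable_mul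
    (hY.memLp_of_gaussianReal (p := 2) (by simp))

lemma HasLaw.integral_sq_of_gaussianReal (hX : HasLaw X (gaussianReal 0 v) P) :
    ∫ ω, X ω ^ 2 ∂P = v :=
  (hX.integral_comp (f := fun x => x ^ 2) (by fun_prop)).trans integral_sq_gaussianReal_zero

end GaussianMoments

section CenteredIntegrable

variable {Ω : Type*} [MeasurableSpace Ω] {P : Measure Ω}

def centeredIntegrable (P : Measure Ω) : Submodule ℝ (Ω → ℝ) where
  carrier := {f | Integrable f P ∧ ∫ ω, f ω ∂P = 0}
  zero_mem' := ⟨integrable_zero _ _ _, integral_zero _ _⟩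
  add_mem' := fun ⟨hf, hf0⟩ ⟨hg, hg0⟩ => ⟨hf.add hg, by simp [integral_add hf hg, hf0, hg0]⟩
  smul_mem' := fun c _ ⟨hf, hf0⟩ => ⟨hf.smul c, by simp [integral_const_mul, hf0]⟩

lemma IndepFun.mul_mem_centeredIntegrable {X Y : Ω → ℝ} (hXY : IndepFun X Y P)
    (hX : Integrable X P) (hY : Y ∈ centeredIntegrable P) : X * Y ∈ centeredIntegrable P :=
  ⟨hXY.integrable_mul hX hY.1, by
    rw [hXY.integral_mul_eq_mul_integral hX.aestronglyMeasurable hY.1.aestronglyMeasurable,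
      hY.2, mul_zero]⟩

lemma HasLaw.pow_mem_centeredIntegrable_of_odd {X : Ω → ℝ} {v : ℝ≥0}
    (hX : HasLaw X (gaussianReal 0 v) P) {n : ℕ} (hn : Odd n) :
    X ^ n ∈ centeredIntegrable P :=
  ⟨hX.integrable_pow_of_gaussianReal n,
    (hX.integral_comp (f := fun x => x ^ n) (by fun_prop)).trans
      (integral_pow_gaussianReal_zero_of_odd hn)⟩

lemma HasLaw.mem_centeredIntegrable_of_gaussianReal {X : Ω → ℝ} {v : ℝ≥0}
    (hX : HasLaw X (gaussianReal 0 v) P) : X ∈ centeredIntegrable P := by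
  simpa using hX.pow_mem_centeredIntegrable_of_odd odd_one

lemma iIndepFun.mul_mul_mem_centeredIntegrable {ι : Type*} {U : ι → Ω → ℝ} {v : ℝ≥0}
    (hU : iIndepFun U P) (hlaw : ∀ i, HasLaw (U i) (gaussianReal 0 v) P) (i j k : ι) :
    U i * U j * U k ∈ centeredIntegrable P := by
  have hmeas i : AEMeasurable (U i) P := (hlaw i).aemeasurable
  have hcentered i := (hlaw i).mem_centeredIntegrable_of_gaussianReal
  have hprod i j : Integrable (U i * U j) P := (hlaw i).integrable_mul_of_gaussianReal (hlaw j)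
  by_cases hik : i = k <;> by_cases hjk : j = k
  · subst hik hjk
    simpa [pow_three, mul_assoc] using
      (hlaw j).pow_mem_centeredIntegrable_of_odd (n := 3) (by decide)
  · subst hik
    rw [mul_right_comm]
    exact (hU.indepFun_mul_left₀ hmeas i i j (Ne.symm hjk) (Ne.symm hjk)).mul_mem_centeredIntegrable
      (hprod i i) (hcentered j)
  · subst hjk
    rw [show U i * U j * U j = U j * U j * U i by ring]
    exact (hU.indepFun_mul_left₀ hmeas j j i (Ne.symm hik) (Ne.symm hik)).mul_mem_centeredIntegrable
      (hprod j j) (hcentered i)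
  · exact (hU.indepFun_mul_left₀ hmeas i j k hik hjk).mul_mem_centeredIntegrable
      (hprod i j) (hcentered k)

end CenteredIntegrable

end ProbabilityTheory

lemma mul_mul_mem_of_mem_span {R A : Type*} [CommSemiring R] [Semiring A] [Algebra R A]
    {G : Set A} {w : A} {K : Submodule R A} (hG : ∀ x ∈ G, ∀ z ∈ G, x * z * w ∈ K) {x z : A}
    (hx : x ∈ Submodule.span R G) (hz : z ∈ Submodule.span R G) : x * z * w ∈ K := by
  have hGz : ∀ x ∈ G, x * z * w ∈ K := fun x hx' =>
    (Submodule.span_le (p := K.comap (LinearMap.mulRight R w ∘ₗ LinearMap.mulLeft R x))).mpr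
      (hG x hx') hz
  exact (Submodule.span_le (p := K.comap (LinearMap.mulRight R w ∘ₗ LinearMap.mulRight R z))).mpr
    hGz hx

section QAR

variable {Ω : Type*}

lemma qarS_mem_span (φ1 σ : ℝ) (S : Ω → ℝ) (U : ℕ → Ω → ℝ) (k : ℕ) :
    (fun ω => qarS φ1 σ (S ω) (fun j => U j ω) k) ∈
      Submodule.span ℝ (insert S (Set.range U)) := by
  have hU j : U j ∈ Submodule.span ℝ (insert S (Set.range U)) :=
    Submodule.subset_span (Set.mem_insert_of_mem _ ⟨j, rfl⟩)
  induction k with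
  | zero =>
    exact add_mem (Submodule.smul_mem _ φ1 (Submodule.subset_span (Set.mem_insert _ _)))
      (Submodule.smul_mem _ σ (hU 0))
  | succ k ih => exact add_mem (Submodule.smul_mem _ φ1 ih) (Submodule.smul_mem _ σ (hU (k + 1)))

lemma qarY_mul_sub_mem {φ1 φ2 γ σ : ℝ} {K : Submodule ℝ (Ω → ℝ)} {Ym Sm : Ω → ℝ}
    {U : ℕ → Ω → ℝ} (hYU : Ym * U 0 ∈ K) (hUU : ∀ k, U (k + 1) * U 0 ∈ K)
    (hspan : ∀ X ∈ Submodule.span ℝ (insert Sm (Set.range U)),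
      ∀ Z ∈ Submodule.span ℝ (insert Sm (Set.range U)), X * Z * U 0 ∈ K) (k : ℕ) :
    (fun ω => qarY φ1 φ2 γ σ (Sm ω) (Ym ω) (fun j => U j ω) k * U 0 ω
      - σ * φ1 ^ k * U 0 ω ^ 2) ∈ K := by
  have hS : Sm ∈ Submodule.span ℝ (insert Sm (Set.range U)) :=
    Submodule.subset_span (Set.mem_insert _ _)
  have hU j : U j ∈ Submodule.span ℝ (insert Sm (Set.range U)) :=
    Submodule.subset_span (Set.mem_insert_of_mem _ ⟨j, rfl⟩)
  induction k with
  | zero =>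
    have e : (fun ω => qarY φ1 φ2 γ σ (Sm ω) (Ym ω) (fun j => U j ω) 0 * U 0 ω
        - σ * φ1 ^ 0 * U 0 ω ^ 2)
        = φ1 • (Ym * U 0) + φ2 • (Sm * Sm * U 0) + (γ * σ) • (Sm * U 0 * U 0) := by
      ext ω
      simp only [qarY, pow_zero, Pi.add_apply, Pi.smul_apply, Pi.mul_apply, smul_eq_mul]
      ring
    rw [e]
    exact add_mem (add_mem (K.smul_mem _ hYU) (K.smul_mem _ (hspan _ hS _ hS)))
      (K.smul_mem _ (hspan _ hS _ (hU 0)))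
  | succ k ih =>
    set s := fun ω => qarS φ1 σ (Sm ω) (fun j => U j ω) k
    have e : (fun ω => qarY φ1 φ2 γ σ (Sm ω) (Ym ω) (fun j => U j ω) (k + 1) * U 0 ω
        - σ * φ1 ^ (k + 1) * U 0 ω ^ 2)
        = φ1 • (fun ω => qarY φ1 φ2 γ σ (Sm ω) (Ym ω) (fun j => U j ω) k * U 0 ω
            - σ * φ1 ^ k * U 0 ω ^ 2)
          + φ2 • (s * s * U 0) + σ • (U (k + 1) * U 0) + (γ * σ) • (s * U (k + 1) * U 0) := by
      ext ω
      simp only [qarY, Pi.add_apply, Pi.smul_apply, Pi.mul_apply, smul_eq_mul, s]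
      ring
    have hs := qarS_mem_span φ1 σ Sm U k
    rw [e]
    exact add_mem (add_mem (add_mem (K.smul_mem _ ih) (K.smul_mem _ (hspan _ hs _ hs)))
      (K.smul_mem _ (hUU k))) (K.smul_mem _ (hspan _ hs _ (hU (k + 1))))

variable [MeasurableSpace Ω] {P : Measure Ω}

lemma mul_mul_mem_centeredIntegrable_of_mem_span {ι : Type*} {S : Ω → ℝ} {U : ι → Ω → ℝ}
    {v : ℝ≥0} (hS : S ∈ centeredIntegrable P) (hS2 : Integrable (S * S) P)
    (hSU : IndepFun S (fun ω i => U i ω) P) (hU : iIndepFun U P)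
    (hlaw : ∀ i, HasLaw (U i) (gaussianReal 0 v) P) (i₀ : ι) {X Z : Ω → ℝ}
    (hX : X ∈ Submodule.span ℝ (insert S (Set.range U)))
    (hZ : Z ∈ Submodule.span ℝ (insert S (Set.range U))) :
    X * Z * U i₀ ∈ centeredIntegrable P := by
  have hcentered := (hlaw i₀).mem_centeredIntegrable_of_gaussianReal
  have hSUU j : S * U j * U i₀ ∈ centeredIntegrable P := by
    rw [mul_assoc, mul_comm]
    exact (hSU.symm.comp ((measurable_pi_apply j).mul (measurable_pi_apply i₀))
      measurable_id).mul_mem_centeredIntegrable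
      ((hlaw j).integrable_mul_of_gaussianReal (hlaw i₀)) hS
  refine mul_mul_mem_of_mem_span ?_ hX hZ
  rintro x (rfl | ⟨i, rfl⟩) z (rfl | ⟨j, rfl⟩)
  · exact (hSU.comp (measurable_id.mul measurable_id)
      (measurable_pi_apply i₀)).mul_mem_centeredIntegrable hS2 hcentered
  · exact hSUU j
  · rw [mul_comm (U i)]
    exact hSUU i
  · exact hU.mul_mul_mem_centeredIntegrable hlaw i j i₀

end QAR

theorem qar_linear_lp_fails_general
    {Ω : Type*} [MeasurableSpace Ω] (P : Measure Ω) [IsProbabilityMeasure P]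
    (φ1 φ2 γ σ : ℝ) (h : ℕ)
    (Ym Sm : Ω → ℝ) (hSmeas : Measurable Sm)
    (hSmean : ∫ ω, Sm ω ∂P = 0)
    (hS2 : Integrable (fun ω => (Sm ω) ^ 2) P)
    (hYint : Integrable Ym P)
    (U : ℕ → Ω → ℝ)
    (hUmeas : ∀ k, Measurable (U k))
    (hUdist : ∀ k, Measure.map (U k) P = gaussianReal 0 1)
    (hUindep : iIndepFun U P)
    (hindep : IndepFun (fun ω => (Ym ω, Sm ω)) (fun ω (k : ℕ) => U k ω) P) :
    ∫ ω, qarY φ1 φ2 γ σ (Sm ω) (Ym ω) (fun k => U k ω) h * U 0 ω ∂P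
      = σ * φ1 ^ h := by
  have hlaw k : HasLaw (U k) (gaussianReal 0 1) P := ⟨(hUmeas k).aemeasurable, hUdist k⟩
  have hU k := (hlaw k).mem_centeredIntegrable_of_gaussianReal
  have hSm : Sm ∈ centeredIntegrable P :=
    ⟨((memLp_two_iff_integrable_sq hSmeas.aestronglyMeasurable).mpr hS2).integrable one_le_two,
      hSmean⟩
  have hdiff := qarY_mul_sub_mem (φ1 := φ1) (φ2 := φ2) (γ := γ) (σ := σ) (Ym := Ym)
    ((hindep.comp measurable_fst (measurable_pi_apply 0)).mul_mem_centeredIntegrable hYint (hU 0))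
    (fun k => (hUindep.indepFun k.succ_ne_zero).mul_mem_centeredIntegrable (hU (k + 1)).1 (hU 0))
    (fun X hX Z hZ => mul_mul_mem_centeredIntegrable_of_mem_span hSm
      (hS2.congr (.of_forall fun ω => sq (Sm ω)))
      (hindep.comp measurable_snd measurable_id) hUindep hlaw 0 hX hZ) h
  have hsq := ((hlaw 0).integrable_pow_of_gaussianReal 2).const_mul (σ * φ1 ^ h)
  calc ∫ ω, qarY φ1 φ2 γ σ (Sm ω) (Ym ω) (fun k => U k ω) h * U 0 ω ∂P
      = ∫ ω, (qarY φ1 φ2 γ σ (Sm ω) (Ym ω) (fun k => U k ω) h * U 0 ω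
          - σ * φ1 ^ h * U 0 ω ^ 2) + σ * φ1 ^ h * U 0 ω ^ 2 ∂P := by simp
    _ = σ * φ1 ^ h := by
      rw [integral_add hdiff.1 hsq, hdiff.2, integral_const_mul,
        (hlaw 0).integral_sq_of_gaussianReal]
      simp

/-- Let `Ym, Sm` be random initial values with `E[Sm] = 0`,
`E[Sm²] < ∞`, `E[|Ym|] < ∞`, and let `U 0, U 1, …` be i.i.d. standard Gaussian shocks
independent of the pair `(Ym, Sm)`.  If `y_h` is produced by the QAR(1,1) recursion
started at `s₋₁ = Sm`, `y₋₁ = Ym` with inputs `u_k = U k`, then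
`E[y_h · U 0] = σ φ₁^h`: the population coefficient of a linear local projection of
`y_h` on the observed shock `U 0` (which has unit variance) coincides with the
impulse response of the linear AR(1) model `y_t = φ₁ y_{t-1} + σ u_t`, so the linear
local projection captures none of the nonlinearity of the QAR(1,1) model. -/
theorem qar_linear_lp_fails
    {Ω : Type*} [MeasurableSpace Ω] (P : Measure Ω) [IsProbabilityMeasure P]
    (φ1 φ2 γ σ : ℝ) (hφ1 : |φ1| < 1) (h : ℕ) (hh : 1 ≤ h)
    (Ym Sm : Ω → ℝ) (hYmeas : Measurable Ym) (hSmeas : Measurable Sm)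
    (hSmean : ∫ ω, Sm ω ∂P = 0)
    (hS2 : Integrable (fun ω => (Sm ω) ^ 2) P)
    (hYint : Integrable Ym P)
    (U : ℕ → Ω → ℝ)
    (hUmeas : ∀ k, Measurable (U k))
    (hUdist : ∀ k, Measure.map (U k) P = gaussianReal 0 1)
    (hUindep : iIndepFun U P)
    (hindep : IndepFun (fun ω => (Ym ω, Sm ω)) (fun ω (k : ℕ) => U k ω) P) :
    ∫ ω, qarY φ1 φ2 γ σ (Sm ω) (Ym ω) (fun k => U k ω) h * U 0 ω ∂P
      = σ * φ1 ^ h :=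
  qar_linear_lp_fails_general P φ1 φ2 γ σ h Ym Sm hSmeas hSmean hS2 hYint U hUmeas hUdist hUindep
    hindep
end

section
/- Let U be a standard Gaussian random variable independent of the pair (Y, S), where E[Y²] < ∞ and E[S⁴] < ∞. Define the one-step QAR(1,1) updates Y′ = φ₁ Y + φ₂ S² + (1 + γ S) σ U and S′ = φ₁ S + σ U. Suppose the relevant moments are invariant under this update, namely E[S] = 0, E[S³] = 0, E[S′²] = E[S²], and E[S′ Y′] = E[S Y]. Then E[S Y] = σ²/(1 − φ₁²), Var(S) = σ²/(1 − φ₁²), and hence Cov(Y, S) = Var(S); equivalently, the population linear projection of Y onto S (with intercept) has slope one, i.e., Proj(Y | S) = E[Y] + S. -/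
/-!
Expanding the updates and using independence of `U` from `(Y, S)` together with `E[U] = 0`,
`E[U²] = 1`, every term linear in `U` drops out and `E[U² h(Y, S)] = E[h(Y, S)]`. The invariance
conditions then read `v = φ₁² v + σ²` for `v = E[S²]` and `c = φ₁² c + σ²` for `c = E[S Y]`
(the `φ₂` and `γ` terms carry the factors `E[S³]` and `E[S]`, which vanish). So `c = v`, and the
normal equations of least squares give the optimality of `E[Y] + S` among all `c + d S`.
-/

open MeasureTheory ProbabilityTheory

section

variable {Ω : Type*} [MeasurableSpace Ω] {P : Measure Ω}

lemma MeasureTheory.Integrable.pow_of_even_of_le [IsFiniteMeasure P] {f : Ω → ℝ}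
    (hf : AEStronglyMeasurable f P) {k n : ℕ} (hn : Even n) (hkn : k ≤ n)
    (hint : Integrable (fun ω ↦ f ω ^ n) P) :
    Integrable (fun ω ↦ f ω ^ k) P := by
  refine (integrable_norm_pow_of_le hf hkn ?_).mono' (hf.pow k) (ae_of_all _ fun ω ↦ ?_)
  · simpa only [Real.norm_eq_abs, hn.pow_abs] using hint
  · simp [norm_pow]

lemma ProbabilityTheory.HasLaw.memLp_gaussianReal {U : Ω → ℝ} {m : ℝ} {v : NNReal}
    (hU : HasLaw U (gaussianReal m v) P) {p : ENNReal} (hp : p ≠ ⊤) :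
    MemLp U p P := by
  have h := memLp_id_gaussianReal' (μ := m) (v := v) p hp
  rw [← hU.map_eq] at h
  exact (memLp_map_measure_iff aestronglyMeasurable_id hU.aemeasurable).1 h

lemma ProbabilityTheory.HasLaw.integral_sq_gaussianReal_zero {U : Ω → ℝ} {v : NNReal}
    (hU : HasLaw U (gaussianReal 0 v) P) :
    ∫ ω, U ω ^ 2 ∂P = v := by
  have := hU.isProbabilityMeasure
  rw [← variance_of_integral_eq_zero hU.aemeasurable
    (hU.integral_eq.trans integral_id_gaussianReal), hU.variance_eq, variance_id_gaussianReal]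

lemma ProbabilityTheory.IndepFun.integral_add_mul_add_sq_mul [IsFiniteMeasure P]
    {β : Type*} [MeasurableSpace β]
    {X : Ω → β} {U : Ω → ℝ} (hXU : IndepFun X U P) (hU : MemLp U 2 P)
    (hU1 : ∫ ω, U ω ∂P = 0) (hU2 : ∫ ω, U ω ^ 2 ∂P = 1)
    {f g h : β → ℝ} (hg : Measurable g) (hh : Measurable h)
    (hfX : Integrable (fun ω ↦ f (X ω)) P) (hgX : Integrable (fun ω ↦ g (X ω)) P)
    (hhX : Integrable (fun ω ↦ h (X ω)) P) :
    ∫ ω, f (X ω) + U ω * g (X ω) + U ω ^ 2 * h (X ω) ∂P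
      = ∫ ω, f (X ω) ∂P + ∫ ω, h (X ω) ∂P := by
  have hUg : IndepFun U (fun ω ↦ g (X ω)) P := hXU.symm.comp measurable_id hg
  have hUh : IndepFun (fun ω ↦ U ω ^ 2) (fun ω ↦ h (X ω)) P :=
    hXU.symm.comp (measurable_id.pow_const 2) hh
  have hUg_int : Integrable (fun ω ↦ U ω * g (X ω)) P :=
    hUg.integrable_mul (hU.integrable one_le_two) hgX
  have hUh_int : Integrable (fun ω ↦ U ω ^ 2 * h (X ω)) P :=
    hUh.integrable_mul hU.integrable_sq hhX
  rw [integral_add (f := fun ω ↦ f (X ω) + U ω * g (X ω)) (hfX.add hUg_int) hUh_int,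
    integral_add hfX hUg_int,
    hUg.integral_fun_mul_eq_mul_integral hU.aestronglyMeasurable hgX.aestronglyMeasurable,
    hUh.integral_fun_mul_eq_mul_integral (hU.aestronglyMeasurable.pow 2)
      hhX.aestronglyMeasurable,
    hU1, hU2]
  ring

variable [IsProbabilityMeasure P]

lemma integral_sq_sub_affine {Y S : Ω → ℝ} (hY : MemLp Y 2 P) (hS : MemLp S 2 P) (a b : ℝ) :
    ∫ ω, (Y ω - (a + b * S ω)) ^ 2 ∂P
      = ∫ ω, Y ω ^ 2 ∂P - 2 * a * ∫ ω, Y ω ∂P - 2 * b * ∫ ω, S ω * Y ω ∂P + a ^ 2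
        + 2 * a * b * ∫ ω, S ω ∂P + b ^ 2 * ∫ ω, S ω ^ 2 ∂P := by
  have hY1 := hY.integrable one_le_two
  have hS1 := hS.integrable one_le_two
  have hY2 := hY.integrable_sq
  have hS2 := hS.integrable_sq
  have hSY : Integrable (fun ω ↦ S ω * Y ω) P := hS.integrable_mul hY
  have h (ω : Ω) : (Y ω - (a + b * S ω)) ^ 2 = Y ω ^ 2 - 2 * a * Y ω - 2 * b * (S ω * Y ω)
      + a ^ 2 + 2 * a * b * S ω + b ^ 2 * S ω ^ 2 := by ring
  simp_rw [h]
  rw [integral_add (by fun_prop) (by fun_prop), integral_add (by fun_prop) (by fun_prop),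
    integral_add (by fun_prop) (by fun_prop), integral_sub (by fun_prop) (by fun_prop),
    integral_sub (by fun_prop) (by fun_prop)]
  simp [integral_const_mul]

lemma integral_sq_sub_integral_add_mul_le {Y S : Ω → ℝ} (hY : MemLp Y 2 P) (hS : MemLp S 2 P)
    (hS0 : ∫ ω, S ω ∂P = 0) {β : ℝ} (hβ : ∫ ω, S ω * Y ω ∂P = β * ∫ ω, S ω ^ 2 ∂P) (c d : ℝ) :
    ∫ ω, (Y ω - ((∫ ω', Y ω' ∂P) + β * S ω)) ^ 2 ∂P ≤ ∫ ω, (Y ω - (c + d * S ω)) ^ 2 ∂P := by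
  rw [integral_sq_sub_affine hY hS, integral_sq_sub_affine hY hS, hS0, hβ]
  have hvar : 0 ≤ ∫ ω, S ω ^ 2 ∂P := integral_nonneg fun ω ↦ sq_nonneg _
  nlinarith [sq_nonneg (c - ∫ ω, Y ω ∂P), mul_nonneg hvar (sq_nonneg (d - β))]

section QARStep

variable {Y S U : Ω → ℝ} (hU : MemLp U 2 P) (hU1 : ∫ ω, U ω ∂P = 0)
  (hU2 : ∫ ω, U ω ^ 2 ∂P = 1) (φ1 φ2 γ σ : ℝ)
include hU hU1 hU2

lemma integral_sq_ar_step (hSU : IndepFun S U P) (hS : Integrable S P)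
    (hS2 : Integrable (fun ω ↦ S ω ^ 2) P) :
    ∫ ω, (φ1 * S ω + σ * U ω) ^ 2 ∂P = φ1 ^ 2 * ∫ ω, S ω ^ 2 ∂P + σ ^ 2 := by
  calc _ = ∫ ω, φ1 ^ 2 * S ω ^ 2 + U ω * (2 * φ1 * σ * S ω) + U ω ^ 2 * σ ^ 2 ∂P := by
        congr 1; funext ω; ring
    _ = _ := by
      refine (hSU.integral_add_mul_add_sq_mul hU hU1 hU2 (f := fun s ↦ φ1 ^ 2 * s ^ 2)
        (g := fun s ↦ 2 * φ1 * σ * s) (h := fun _ ↦ σ ^ 2) (by fun_prop) (by fun_prop)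
        (hS2.const_mul _) (hS.const_mul _) (integrable_const _)).trans ?_
      simp [integral_const_mul]

lemma integral_mul_qar_step (hYSU : IndepFun (fun ω ↦ (Y ω, S ω)) U P) (hY : Integrable Y P)
    (hS : Integrable S P) (hS2 : Integrable (fun ω ↦ S ω ^ 2) P)
    (hS3 : Integrable (fun ω ↦ S ω ^ 3) P) (hSY : Integrable (fun ω ↦ S ω * Y ω) P) :
    ∫ ω, (φ1 * S ω + σ * U ω) * (φ1 * Y ω + φ2 * S ω ^ 2 + (1 + γ * S ω) * σ * U ω) ∂P
      = φ1 ^ 2 * ∫ ω, S ω * Y ω ∂P + φ1 * φ2 * ∫ ω, S ω ^ 3 ∂P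
        + σ ^ 2 + γ * σ ^ 2 * ∫ ω, S ω ∂P := by
  calc _ = ∫ ω, (φ1 ^ 2 * (S ω * Y ω) + φ1 * φ2 * S ω ^ 3)
          + U ω * (σ * φ1 * Y ω + (σ * φ2 + φ1 * γ * σ) * S ω ^ 2 + φ1 * σ * S ω)
          + U ω ^ 2 * (σ ^ 2 + γ * σ ^ 2 * S ω) ∂P := by
        congr 1; funext ω; ring
    _ = _ := by
      refine (hYSU.integral_add_mul_add_sq_mul hU hU1 hU2
        (f := fun p ↦ φ1 ^ 2 * (p.2 * p.1) + φ1 * φ2 * p.2 ^ 3)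
        (g := fun p ↦ σ * φ1 * p.1 + (σ * φ2 + φ1 * γ * σ) * p.2 ^ 2 + φ1 * σ * p.2)
        (h := fun p ↦ σ ^ 2 + γ * σ ^ 2 * p.2) (by fun_prop) (by fun_prop)
        ((hSY.const_mul _).add (hS3.const_mul _))
        (((hY.const_mul _).add (hS2.const_mul _)).add (hS.const_mul _))
        ((integrable_const _).add (hS.const_mul _))).trans ?_
      rw [integral_add (hSY.const_mul _) (hS3.const_mul _),
        integral_add (integrable_const _) (hS.const_mul _)]
      simp [integral_const_mul]
      ring

end QARStep

end

/-- Let `U` be a standard Gaussian random variable independent of the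
pair `(Y, S)` with `E[Y²] < ∞` and `E[S⁴] < ∞`.  Define the one-step QAR(1,1) updates
`Y' = φ₁ Y + φ₂ S² + (1 + γ S) σ U` and `S' = φ₁ S + σ U`.  If the relevant moments are
invariant under this update — `E[S] = 0`, `E[S³] = 0`, `E[S'²] = E[S²]`,
`E[S' Y'] = E[S Y]` — then `E[S Y] = σ²/(1 − φ₁²)`, `Var(S) = σ²/(1 − φ₁²)`, hence
`Cov(Y, S) = Var(S)`: the population linear projection of `Y` onto `S` (with intercept)
has slope one, i.e. `Proj(Y | S) = E[Y] + S`. -/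
theorem qar_projection_identity
    {Ω : Type*} [MeasurableSpace Ω] (P : Measure Ω) [IsProbabilityMeasure P]
    (φ1 φ2 γ σ : ℝ) (hφ1 : |φ1| < 1)
    (Y S U : Ω → ℝ)
    (hYmeas : Measurable Y) (hSmeas : Measurable S) (hUmeas : Measurable U)
    (hUdist : Measure.map U P = gaussianReal 0 1)
    (hindep : IndepFun (fun ω => (Y ω, S ω)) U P)
    (hY2 : Integrable (fun ω => (Y ω) ^ 2) P)
    (hS4 : Integrable (fun ω => (S ω) ^ 4) P)
    (hSmean : ∫ ω, S ω ∂P = 0)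
    (hS3 : ∫ ω, (S ω) ^ 3 ∂P = 0)
    (hS'2 : ∫ ω, (φ1 * S ω + σ * U ω) ^ 2 ∂P = ∫ ω, (S ω) ^ 2 ∂P)
    (hS'Y' : ∫ ω, (φ1 * S ω + σ * U ω)
        * (φ1 * Y ω + φ2 * (S ω) ^ 2 + (1 + γ * S ω) * σ * U ω) ∂P
      = ∫ ω, S ω * Y ω ∂P) :
    (∫ ω, S ω * Y ω ∂P) = σ ^ 2 / (1 - φ1 ^ 2)
    ∧ (∫ ω, (S ω) ^ 2 ∂P) - (∫ ω, S ω ∂P) ^ 2 = σ ^ 2 / (1 - φ1 ^ 2)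
    ∧ (∫ ω, S ω * Y ω ∂P) - (∫ ω, S ω ∂P) * (∫ ω, Y ω ∂P)
        = (∫ ω, (S ω) ^ 2 ∂P) - (∫ ω, S ω ∂P) ^ 2
    ∧ ∀ c d : ℝ,
        ∫ ω, (Y ω - ((∫ ω', Y ω' ∂P) + S ω)) ^ 2 ∂P
          ≤ ∫ ω, (Y ω - (c + d * S ω)) ^ 2 ∂P := by
  have hU : HasLaw U (gaussianReal 0 1) P := ⟨hUmeas.aemeasurable, hUdist⟩
  have hUL2 : MemLp U 2 P := hU.memLp_gaussianReal (by simp)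
  have hU1 : ∫ ω, U ω ∂P = 0 := hU.integral_eq.trans integral_id_gaussianReal
  have hU2 : ∫ ω, U ω ^ 2 ∂P = 1 := hU.integral_sq_gaussianReal_zero
  have hYL2 : MemLp Y 2 P := (memLp_two_iff_integrable_sq hYmeas.aestronglyMeasurable).2 hY2
  have hS_pow (k : ℕ) (hk : k ≤ 4) : Integrable (fun ω ↦ S ω ^ k) P :=
    hS4.pow_of_even_of_le hSmeas.aestronglyMeasurable (by decide) hk
  have hS1 : Integrable S P := by simpa using hS_pow 1 (by norm_num)
  have hSL2 : MemLp S 2 P :=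
    (memLp_two_iff_integrable_sq hSmeas.aestronglyMeasurable).2 (hS_pow 2 (by norm_num))
  have hSY : Integrable (fun ω ↦ S ω * Y ω) P := hSL2.integrable_mul hYL2
  have hpos : 0 < 1 - φ1 ^ 2 := by nlinarith [sq_abs φ1, abs_nonneg φ1]
  have hvar : ∫ ω, S ω ^ 2 ∂P = σ ^ 2 / (1 - φ1 ^ 2) := by
    rw [eq_div_iff hpos.ne']
    linear_combination hS'2.symm.trans (integral_sq_ar_step hUL2 hU1 hU2 φ1 σ
      (hindep.comp measurable_snd measurable_id) hS1 (hS_pow 2 (by norm_num)))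
  have hcov : ∫ ω, S ω * Y ω ∂P = σ ^ 2 / (1 - φ1 ^ 2) := by
    have h := integral_mul_qar_step hUL2 hU1 hU2 φ1 φ2 γ σ hindep (hYL2.integrable one_le_two)
      hS1 (hS_pow 2 (by norm_num)) (hS_pow 3 (by norm_num)) hSY
    rw [hS3, hSmean] at h
    rw [eq_div_iff hpos.ne']
    linear_combination hS'Y'.symm.trans h
  refine ⟨hcov, by rw [hSmean, hvar]; ring, by rw [hSmean, hcov, hvar]; ring, fun c d ↦ ?_⟩
  simpa using integral_sq_sub_integral_add_mul_le hYL2 hSL2 hSmean (β := 1)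
    (by rw [hcov, hvar, one_mul]) c d
end

section
/- In the shock-conditional setting, for every δ ∈ ℝ the losses are ranked as L_Feas(δ) ≤ L_Lag(δ) ≤ L_Lin(δ) and L_Feas(δ) ≤ L_Asym(δ); moreover the gains satisfy L_Lin(δ) − L_Lag(δ) = a² δ² · Cov(S, Y′)²/Var(Y′) and L_Lin(δ) − L_Asym(δ) = q² (2 m |δ|³ − m² δ²). -/
/-!
Every loss is the second moment of an affine image `b X + c` of a centred variable, hence equals
`b² Var X + c²`. The Lagrangian residual `W = S − λ (Y' − E Y')` is centred, and with the
regression coefficient `λ = Cov(S, Y') / Var Y'` its variance is `Var S − Cov(S, Y')² / Var Y'`.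
The ranking and the two gains then reduce to comparing these closed forms.
-/

open MeasureTheory ProbabilityTheory

namespace ProbabilityTheory

variable {Ω : Type*} [MeasurableSpace Ω] {P : Measure Ω} [IsProbabilityMeasure P] {X Y : Ω → ℝ}

lemma integral_mul_add_sq_of_integral_eq_zero (hX : MemLp X 2 P) (hX0 : P[X] = 0) (b c : ℝ) :
    ∫ ω, (b * X ω + c) ^ 2 ∂P = b ^ 2 * Var[X; P] + c ^ 2 := by
  have hZ : MemLp (fun ω ↦ b * X ω + c) 2 P := (hX.const_mul b).add (memLp_const c)
  have hmean : P[fun ω ↦ b * X ω + c] = c := by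
    rw [integral_add ((hX.integrable one_le_two).const_mul b) (integrable_const c),
      integral_const_mul, hX0]
    simp
  have hvar : Var[fun ω ↦ b * X ω + c; P] = b ^ 2 * Var[X; P] := by
    rw [variance_add_const (hX.const_mul b).aestronglyMeasurable, variance_const_mul]
  have h := variance_eq_sub hZ
  change _ = ∫ ω, (b * X ω + c) ^ 2 ∂P - P[fun ω ↦ b * X ω + c] ^ 2 at h
  rw [hmean, hvar] at h
  linarith

lemma integral_sub_mul_sub_integral (hX : Integrable X P) (hY : Integrable Y P) (l : ℝ) :
    ∫ ω, (X ω - l * (Y ω - P[Y])) ∂P = P[X] := by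
  have hYc : Integrable (fun ω ↦ Y ω - P[Y]) P := hY.sub (integrable_const _)
  rw [integral_sub hX (hYc.const_mul l), integral_const_mul,
    integral_sub hY (integrable_const _)]
  simp

lemma variance_sub_mul_sub_integral (hX : MemLp X 2 P) (hY : MemLp Y 2 P) (l : ℝ) :
    Var[fun ω ↦ X ω - l * (Y ω - P[Y]); P]
      = Var[X; P] - 2 * l * cov[X, Y; P] + l ^ 2 * Var[Y; P] := by
  have hYc : MemLp (fun ω ↦ Y ω - P[Y]) 2 P := hY.sub (memLp_const _)
  rw [variance_fun_sub hX (hYc.const_mul l), covariance_const_mul_right,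
    covariance_sub_const_right (hY.integrable one_le_two), variance_const_mul,
    variance_sub_const hY.aestronglyMeasurable]
  ring

lemma variance_sub_regression (hX : MemLp X 2 P) (hY : MemLp Y 2 P) :
    Var[fun ω ↦ X ω - cov[X, Y; P] / Var[Y; P] * (Y ω - P[Y]); P]
      = Var[X; P] - cov[X, Y; P] ^ 2 / Var[Y; P] := by
  rw [variance_sub_mul_sub_integral hX hY]
  rcases eq_or_ne Var[Y; P] 0 with hV | hV
  · simp [hV]
  · field_simp
    ring

end ProbabilityTheory

theorem shock_conditional_mse_ranking_general
    {Ω : Type*} [MeasurableSpace Ω] (P : Measure Ω) [IsProbabilityMeasure P]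
    (S Y' : Ω → ℝ)
    (hS2 : MemLp S 2 P) (hY'2 : MemLp Y' 2 P)
    (hSmean : ∫ ω, S ω ∂P = 0)
    (a q δ : ℝ) :
    let covSY : ℝ := (∫ ω, S ω * Y' ω ∂P) - (∫ ω, S ω ∂P) * (∫ ω, Y' ω ∂P)
    let varY : ℝ := (∫ ω, (Y' ω) ^ 2 ∂P) - (∫ ω, Y' ω ∂P) ^ 2
    let lam : ℝ := covSY / varY
    let W : Ω → ℝ := fun ω => S ω - lam * (Y' ω - ∫ ω', Y' ω' ∂P)
    let m : ℝ := Real.sqrt (2 / Real.pi) / (1 - 2 / Real.pi)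
    let LLin : ℝ := ∫ ω, (a * S ω * δ + q * δ ^ 2) ^ 2 ∂P
    let LLag : ℝ := ∫ ω, (a * W ω * δ + q * δ ^ 2) ^ 2 ∂P
    let LFeas : ℝ := ∫ ω, (a * W ω * δ) ^ 2 ∂P
    let LAsym : ℝ := ∫ ω, (a * S ω * δ + q * (δ ^ 2 - m * |δ|)) ^ 2 ∂P
    LFeas ≤ LLag
    ∧ LLag ≤ LLin
    ∧ LFeas ≤ LAsym
    ∧ LLin - LLag = a ^ 2 * δ ^ 2 * (covSY ^ 2 / varY)
    ∧ LLin - LAsym = q ^ 2 * (2 * m * |δ| ^ 3 - m ^ 2 * δ ^ 2) := by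
  intro covSY varY lam W m LLin LLag LFeas LAsym
  have hcov : covSY = cov[S, Y'; P] := (covariance_eq_sub hS2 hY'2).symm
  have hvar : varY = Var[Y'; P] := (variance_eq_sub hY'2).symm
  have hW2 : MemLp W 2 P := hS2.sub ((hY'2.sub (memLp_const _)).const_mul lam)
  have hWmean : P[W] = 0 :=
    (integral_sub_mul_sub_integral (hS2.integrable one_le_two)
      (hY'2.integrable one_le_two) lam).trans hSmean
  have hVarW : Var[W; P] = Var[S; P] - covSY ^ 2 / varY := by
    rw [hcov, hvar, ← variance_sub_regression hS2 hY'2, ← hcov, ← hvar]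
  have hLoss : ∀ {X : Ω → ℝ}, MemLp X 2 P → P[X] = 0 → ∀ c : ℝ,
      ∫ ω, (a * X ω * δ + c) ^ 2 ∂P = (a * δ) ^ 2 * Var[X; P] + c ^ 2 := fun hX hX0 c ↦ by
    rw [← integral_mul_add_sq_of_integral_eq_zero hX hX0]
    simp only [mul_right_comm a _ δ]
  have hLin : LLin = (a * δ) ^ 2 * Var[S; P] + (q * δ ^ 2) ^ 2 := hLoss hS2 hSmean _
  have hLag : LLag = (a * δ) ^ 2 * Var[W; P] + (q * δ ^ 2) ^ 2 := hLoss hW2 hWmean _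
  have hFeas : LFeas = (a * δ) ^ 2 * Var[W; P] := by simpa using hLoss hW2 hWmean 0
  have hAsym : LAsym = (a * δ) ^ 2 * Var[S; P] + (q * (δ ^ 2 - m * |δ|)) ^ 2 :=
    hLoss hS2 hSmean _
  have hgain : 0 ≤ covSY ^ 2 / varY :=
    div_nonneg (sq_nonneg _) (hvar ▸ variance_nonneg Y' P)
  have hδ : δ ^ 2 = |δ| ^ 2 := (sq_abs δ).symm
  refine ⟨?_, ?_, ?_, ?_, ?_⟩
  · rw [hFeas, hLag]
    linarith [sq_nonneg (q * δ ^ 2)]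
  · rw [hLag, hLin, hVarW]
    linarith [mul_nonneg (sq_nonneg (a * δ)) hgain]
  · rw [hFeas, hAsym, hVarW]
    linarith [mul_nonneg (sq_nonneg (a * δ)) hgain, sq_nonneg (q * (δ ^ 2 - m * |δ|))]
  · rw [hLin, hLag, hVarW]
    ring
  · rw [hLin, hAsym, hδ]
    ring

/-- Shock-conditional ranking.  With `S, Y'` square-integrable,
`E[S] = 0`, `Var(Y') > 0`, `λ = Cov(S,Y')/Var(Y')`, `W = S − λ(Y' − E[Y'])` and
`m = √(2/π)/(1 − 2/π)`, the shock-conditional losses satisfy, for the fixed shock `δ`,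
`L_Feas(δ) ≤ L_Lag(δ) ≤ L_Lin(δ)` and `L_Feas(δ) ≤ L_Asym(δ)`; moreover
`L_Lin(δ) − L_Lag(δ) = a²δ²·Cov(S,Y')²/Var(Y')` and
`L_Lin(δ) − L_Asym(δ) = q²(2m|δ|³ − m²δ²)`. -/
theorem shock_conditional_mse_ranking
    {Ω : Type*} [MeasurableSpace Ω] (P : Measure Ω) [IsProbabilityMeasure P]
    (S Y' : Ω → ℝ) (hSmeas : Measurable S) (hY'meas : Measurable Y')
    (hS2 : MemLp S 2 P) (hY'2 : MemLp Y' 2 P)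
    (hSmean : ∫ ω, S ω ∂P = 0)
    (hY'var : 0 < (∫ ω, (Y' ω) ^ 2 ∂P) - (∫ ω, Y' ω ∂P) ^ 2)
    (a q δ : ℝ) :
    let covSY : ℝ := (∫ ω, S ω * Y' ω ∂P) - (∫ ω, S ω ∂P) * (∫ ω, Y' ω ∂P)
    let varY : ℝ := (∫ ω, (Y' ω) ^ 2 ∂P) - (∫ ω, Y' ω ∂P) ^ 2
    let lam : ℝ := covSY / varY
    let W : Ω → ℝ := fun ω => S ω - lam * (Y' ω - ∫ ω', Y' ω' ∂P)
    let m : ℝ := Real.sqrt (2 / Real.pi) / (1 - 2 / Real.pi)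
    let LLin : ℝ := ∫ ω, (a * S ω * δ + q * δ ^ 2) ^ 2 ∂P
    let LLag : ℝ := ∫ ω, (a * W ω * δ + q * δ ^ 2) ^ 2 ∂P
    let LFeas : ℝ := ∫ ω, (a * W ω * δ) ^ 2 ∂P
    let LAsym : ℝ := ∫ ω, (a * S ω * δ + q * (δ ^ 2 - m * |δ|)) ^ 2 ∂P
    LFeas ≤ LLag
    ∧ LLag ≤ LLin
    ∧ LFeas ≤ LAsym
    ∧ LLin - LLag = a ^ 2 * δ ^ 2 * (covSY ^ 2 / varY)
    ∧ LLin - LAsym = q ^ 2 * (2 * m * |δ| ^ 3 - m ^ 2 * δ ^ 2) :=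
  shock_conditional_mse_ranking_general P S Y' hS2 hY'2 hSmean a q δ
end

section
/- In the shock-conditional setting, assume q ≠ 0. Then L_Asym(δ) ≤ L_Lin(δ) if and only if |δ| ≥ m/2 (with equality exactly when |δ| ∈ {0, m/2}); the gain satisfies L_Lin(δ) − L_Asym(δ) = q² m δ² (2|δ| − m); and the function t ↦ q² m t² (2t − m) is strictly increasing on [m/2, ∞), so the gain of the shock-based specification over the linear specification grows with the shock magnitude once |δ| exceeds the threshold m/2. -/
open MeasureTheory ProbabilityTheory

/-! The shock `a S δ` is centred, so adding a constant `c` to it adds exactly `c²` to its second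
moment: the two losses differ only in their deterministic parts `q δ²` and `q (δ² − m|δ|)`, and
the difference of their squares is the cubic `q² m |δ|² (2|δ| − m)` in `|δ|`. -/

section SecondMoment

variable {Ω : Type*} [MeasurableSpace Ω] {P : Measure Ω} [IsProbabilityMeasure P]

lemma integral_add_const_sq {X : Ω → ℝ} (hX : MemLp X 2 P) (hX0 : ∫ ω, X ω ∂P = 0) (c : ℝ) :
    ∫ ω, (X ω + c) ^ 2 ∂P = ∫ ω, X ω ^ 2 ∂P + c ^ 2 := by
  have hX1 : Integrable X P := hX.integrable one_le_two
  have hlin : Integrable (fun ω => 2 * c * X ω + c ^ 2) P :=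
    (hX1.const_mul _).add (integrable_const _)
  calc ∫ ω, (X ω + c) ^ 2 ∂P = ∫ ω, X ω ^ 2 + (2 * c * X ω + c ^ 2) ∂P := by
        congr 1 with ω; ring
    _ = ∫ ω, X ω ^ 2 ∂P + c ^ 2 := by
        rw [integral_add hX.integrable_sq hlin, integral_add (hX1.const_mul _) (integrable_const _),
          integral_const_mul, hX0]
        simp

lemma integral_add_const_sq_sub_integral_add_const_sq {X : Ω → ℝ} (hX : MemLp X 2 P)
    (hX0 : ∫ ω, X ω ∂P = 0) (c₁ c₂ : ℝ) :
    ∫ ω, (X ω + c₁) ^ 2 ∂P - ∫ ω, (X ω + c₂) ^ 2 ∂P = c₁ ^ 2 - c₂ ^ 2 := by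
  rw [integral_add_const_sq hX hX0, integral_add_const_sq hX hX0]
  ring

end SecondMoment

section Cubic

variable {c m t : ℝ}

lemma mul_sq_mul_two_mul_sub_nonneg_iff (hc : 0 < c) (ht : t ≠ 0) :
    0 ≤ c * t ^ 2 * (2 * t - m) ↔ m / 2 ≤ t := by
  rw [mul_nonneg_iff_of_pos_left (by positivity)]
  constructor <;> intro h <;> linarith

lemma mul_sq_mul_two_mul_sub_eq_zero_iff (hc : c ≠ 0) :
    c * t ^ 2 * (2 * t - m) = 0 ↔ t = 0 ∨ t = m / 2 := by
  rw [eq_div_iff two_ne_zero, mul_comm t 2, ← sub_eq_zero (b := m)]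
  simp only [mul_eq_zero, hc, false_or, pow_eq_zero_iff two_ne_zero]

lemma strictMonoOn_mul_sq_mul_two_mul_sub (hc : 0 < c) (hm : 0 ≤ m) :
    StrictMonoOn (fun t : ℝ => c * t ^ 2 * (2 * t - m)) (Set.Ici (m / 2)) := by
  intro x hx y hy hxy
  simp only [Set.mem_Ici] at hx hy
  have hx0 : 0 ≤ x := by linarith
  have hsq : x ^ 2 < y ^ 2 := pow_lt_pow_left₀ hxy hx0 two_ne_zero
  have hlin : 0 ≤ 2 * x - m := by linarith
  have hcubic : x ^ 2 * (2 * x - m) < y ^ 2 * (2 * y - m) :=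
    calc x ^ 2 * (2 * x - m) ≤ x ^ 2 * (2 * y - m) := by gcongr
      _ < y ^ 2 * (2 * y - m) := by
        gcongr
        linarith
  simpa only [mul_assoc] using mul_lt_mul_of_pos_left hcubic hc

end Cubic

lemma sqrt_two_div_pi_div_one_sub_two_div_pi_pos :
    0 < Real.sqrt (2 / Real.pi) / (1 - 2 / Real.pi) := by
  have hlt : 2 / Real.pi < 1 := by
    rw [div_lt_one Real.pi_pos]
    linarith [Real.pi_gt_three]
  exact div_pos (Real.sqrt_pos.mpr (by positivity)) (by linarith)

theorem asymlp_gain_threshold_general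
    {Ω : Type*} [MeasurableSpace Ω] (P : Measure Ω) [IsProbabilityMeasure P]
    (S : Ω → ℝ)
    (hS2 : MemLp S 2 P)
    (hSmean : ∫ ω, S ω ∂P = 0)
    (a q δ : ℝ) (hq : q ≠ 0) :
    let m : ℝ := Real.sqrt (2 / Real.pi) / (1 - 2 / Real.pi)
    let LLin : ℝ := ∫ ω, (a * S ω * δ + q * δ ^ 2) ^ 2 ∂P
    let LAsym : ℝ := ∫ ω, (a * S ω * δ + q * (δ ^ 2 - m * |δ|)) ^ 2 ∂P
    LLin - LAsym = q ^ 2 * m * δ ^ 2 * (2 * |δ| - m)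
    ∧ (δ ≠ 0 → (LAsym ≤ LLin ↔ m / 2 ≤ |δ|))
    ∧ (LAsym = LLin ↔ |δ| = 0 ∨ |δ| = m / 2)
    ∧ StrictMonoOn (fun t : ℝ => q ^ 2 * m * t ^ 2 * (2 * t - m)) (Set.Ici (m / 2)) := by
  intro m LLin LAsym
  have hm : 0 < m := sqrt_two_div_pi_div_one_sub_two_div_pi_pos
  have hk : 0 < q ^ 2 * m := by positivity
  have hshock : MemLp (fun ω => a * S ω * δ) 2 P := (hS2.const_mul a).mul_const δ
  have hshock0 : ∫ ω, a * S ω * δ ∂P = 0 := by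
    rw [integral_mul_const, integral_const_mul, hSmean, mul_zero, zero_mul]
  have hgain : LLin - LAsym = q ^ 2 * m * δ ^ 2 * (2 * |δ| - m) := by
    rw [integral_add_const_sq_sub_integral_add_const_sq hshock hshock0]
    linear_combination (-(q ^ 2 * m ^ 2)) * sq_abs δ
  rw [← sq_abs δ] at hgain
  refine ⟨by rwa [sq_abs] at hgain, fun hδ => ?_, ?_, strictMonoOn_mul_sq_mul_two_mul_sub hk hm.le⟩
  · rw [← sub_nonneg, hgain]
    exact mul_sq_mul_two_mul_sub_nonneg_iff hk (abs_ne_zero.mpr hδ)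
  · rw [eq_comm, ← sub_eq_zero, hgain]
    exact mul_sq_mul_two_mul_sub_eq_zero_iff hk.ne'

/-- Shock-conditional comparison of the shock-based and linear
specifications, for `q ≠ 0`.  With the losses of the shock-conditional setting,
`L_Asym(δ) ≤ L_Lin(δ)` if and only if `|δ| ≥ m/2` (for `δ ≠ 0`; equality holds exactly
when `|δ| ∈ {0, m/2}`); the gain satisfies
`L_Lin(δ) − L_Asym(δ) = q² m δ² (2|δ| − m)`; and `t ↦ q² m t² (2t − m)` is strictly
increasing on `[m/2, ∞)`, so the gain of the shock-based specification over the linear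
one grows with the shock magnitude once `|δ|` exceeds the threshold `m/2`. -/
theorem asymlp_gain_threshold
    {Ω : Type*} [MeasurableSpace Ω] (P : Measure Ω) [IsProbabilityMeasure P]
    (S Y' : Ω → ℝ) (hSmeas : Measurable S) (hY'meas : Measurable Y')
    (hS2 : MemLp S 2 P) (hY'2 : MemLp Y' 2 P)
    (hSmean : ∫ ω, S ω ∂P = 0)
    (hY'var : 0 < (∫ ω, (Y' ω) ^ 2 ∂P) - (∫ ω, Y' ω ∂P) ^ 2)
    (a q δ : ℝ) (hq : q ≠ 0) :
    let m : ℝ := Real.sqrt (2 / Real.pi) / (1 - 2 / Real.pi)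
    let LLin : ℝ := ∫ ω, (a * S ω * δ + q * δ ^ 2) ^ 2 ∂P
    let LAsym : ℝ := ∫ ω, (a * S ω * δ + q * (δ ^ 2 - m * |δ|)) ^ 2 ∂P
    LLin - LAsym = q ^ 2 * m * δ ^ 2 * (2 * |δ| - m)
    ∧ (δ ≠ 0 → (LAsym ≤ LLin ↔ m / 2 ≤ |δ|))
    ∧ (LAsym = LLin ↔ |δ| = 0 ∨ |δ| = m / 2)
    ∧ StrictMonoOn (fun t : ℝ => q ^ 2 * m * t ^ 2 * (2 * t - m)) (Set.Ici (m / 2)) :=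
  asymlp_gain_threshold_general P S hS2 hSmean a q δ hq
end

section
/- Let Z be a real random variable with E[Z] = 0 and E[Z²] < ∞, and define the causal weight function ω(u) = Cov(1{Z ≥ u}, Z) = E[Z·1{Z ≥ u}] for u ∈ ℝ. Then ω is Lebesgue integrable on ℝ and ∫_ℝ ω(u) du = E[Z²] = Var(Z). In particular, if Var(Z) = 1 then the causal weights integrate to one. -/
/-!
Because `E[Z] = 0`, the indicator `1{u ≤ Z}` in `ω(u)` may be replaced by the centred step
`1{u ≤ Z} - 1{u ≤ 0}`. Multiplied by `z`, this step equals `|z|` on the interval between `0` and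
`z` and vanishes elsewhere, so it is nonnegative with `u`-integral `z²`. Hence the integrand is
integrable on `Ω × ℝ` precisely because `E[Z²] < ∞`, and Fubini turns `∫ ω(u) du` into `E[Z²]`.
-/

open MeasureTheory Set

noncomputable def signedLayer (z u : ℝ) : ℝ := (if u ≤ z then 1 else 0) - (if u ≤ 0 then 1 else 0)

lemma mul_signedLayer_eq_indicator (z u : ℝ) :
    z * signedLayer z u = (Ioc (min z 0) (max z 0)).indicator (fun _ => |z|) u := by
  simp only [signedLayer, indicator_apply, mem_Ioc]
  rcases le_total 0 z with hz | hz
  · rw [min_eq_right hz, max_eq_left hz, abs_of_nonneg hz]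
    split_ifs <;> grind
  · rw [min_eq_left hz, max_eq_right hz, abs_of_nonpos hz]
    split_ifs <;> grind

lemma measurable_mul_signedLayer :
    Measurable fun p : ℝ × ℝ => p.1 * signedLayer p.1 p.2 := by
  unfold signedLayer
  refine measurable_fst.mul (Measurable.sub ?_ ?_) <;>
    exact Measurable.ite (measurableSet_le measurable_snd (by fun_prop)) measurable_const
      measurable_const

lemma norm_mul_signedLayer_le (z u : ℝ) : ‖z * signedLayer z u‖ ≤ ‖z‖ := by
  simp only [mul_signedLayer_eq_indicator, norm_indicator_eq_indicator_norm, norm_abs_eq_norm]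
  exact indicator_le_self' (fun _ _ => norm_nonneg z) u

lemma integrable_mul_signedLayer (z : ℝ) : Integrable fun u => z * signedLayer z u := by
  simp only [mul_signedLayer_eq_indicator]
  exact (integrable_indicator_iff measurableSet_Ioc).2 (integrableOn_const measure_Ioc_lt_top.ne)

lemma integral_indicator_Ioc_min_max_abs (z : ℝ) :
    ∫ u, (Ioc (min z 0) (max z 0)).indicator (fun _ => |z|) u = z ^ 2 := by
  rw [integral_indicator_const _ measurableSet_Ioc, Real.volume_real_Ioc_of_le min_le_max,
    max_sub_min_eq_abs, zero_sub, abs_neg, smul_eq_mul, ← sq, sq_abs]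

lemma integral_mul_signedLayer (z : ℝ) : ∫ u, z * signedLayer z u = z ^ 2 := by
  simp only [mul_signedLayer_eq_indicator, integral_indicator_Ioc_min_max_abs]

lemma integral_norm_mul_signedLayer (z : ℝ) : ∫ u, ‖z * signedLayer z u‖ = z ^ 2 := by
  simp only [mul_signedLayer_eq_indicator, norm_indicator_eq_indicator_norm, norm_abs_eq_norm,
    Real.norm_eq_abs, integral_indicator_Ioc_min_max_abs]

section Fubini

variable {Ω : Type*} [MeasurableSpace Ω] {μ : Measure Ω} {X : Ω → ℝ}

lemma aestronglyMeasurable_mul_signedLayer_prod (hX : AEStronglyMeasurable X μ) :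
    AEStronglyMeasurable (fun p : Ω × ℝ => X p.1 * signedLayer (X p.1) p.2) (μ.prod volume) :=
  (measurable_mul_signedLayer.comp_aemeasurable
    (hX.aemeasurable.comp_fst.prodMk measurable_snd.aemeasurable)).aestronglyMeasurable

lemma integrable_mul_signedLayer_prod (hX : AEStronglyMeasurable X μ)
    (hX2 : Integrable (fun ω => X ω ^ 2) μ) :
    Integrable (fun p : Ω × ℝ => X p.1 * signedLayer (X p.1) p.2) (μ.prod volume) := by
  rw [integrable_prod_iff (aestronglyMeasurable_mul_signedLayer_prod hX)]
  exact ⟨.of_forall fun ω => integrable_mul_signedLayer (X ω),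
    hX2.congr (.of_forall fun ω => (integral_norm_mul_signedLayer (X ω)).symm)⟩

lemma integral_integral_mul_signedLayer [SFinite μ] (hX : AEStronglyMeasurable X μ)
    (hX2 : Integrable (fun ω => X ω ^ 2) μ) :
    ∫ u, ∫ ω, X ω * signedLayer (X ω) u ∂μ = ∫ ω, X ω ^ 2 ∂μ := by
  rw [← integral_integral_swap (integrable_mul_signedLayer_prod hX hX2)]
  simp only [integral_mul_signedLayer]

lemma MeasureTheory.Integrable.mul_signedLayer (hX : Integrable X μ) (u : ℝ) :
    Integrable (fun ω => X ω * signedLayer (X ω) u) μ :=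
  hX.mono ((measurable_mul_signedLayer.comp_aemeasurable
      (hX.aemeasurable.prodMk aemeasurable_const)).aestronglyMeasurable)
    (.of_forall fun ω => norm_mul_signedLayer_le (X ω) u)

lemma integral_mul_ite_le_eq_integral_mul_signedLayer (hX : Integrable X μ)
    (hmean : ∫ ω, X ω ∂μ = 0) (u : ℝ) :
    ∫ ω, X ω * (if u ≤ X ω then 1 else 0) ∂μ = ∫ ω, X ω * signedLayer (X ω) u ∂μ := by
  have hsplit : ∀ ω, X ω * (if u ≤ X ω then 1 else 0)
      = X ω * signedLayer (X ω) u + (if u ≤ 0 then 1 else 0) * X ω := by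
    intro ω
    simp only [signedLayer]
    ring
  simp only [hsplit]
  rw [integral_add (hX.mul_signedLayer u) (hX.const_mul _), integral_const_mul, hmean, mul_zero,
    add_zero]

end Fubini

theorem causal_weights_integrate_to_variance_general
    {Ω : Type*} [MeasurableSpace Ω] (P : Measure Ω) [IsProbabilityMeasure P]
    (Z : Ω → ℝ)
    (hZint : Integrable Z P)
    (hZ2 : Integrable (fun ω => (Z ω) ^ 2) P)
    (hZmean : ∫ ω, Z ω ∂P = 0) :
    let w : ℝ → ℝ := fun u => ∫ ω, Z ω * (if u ≤ Z ω then (1 : ℝ) else 0) ∂P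
    Integrable w (volume : Measure ℝ)
    ∧ (∫ u, w u ∂(volume : Measure ℝ)) = ∫ ω, (Z ω) ^ 2 ∂P
    ∧ (∫ ω, (Z ω) ^ 2 ∂P) = (∫ ω, (Z ω) ^ 2 ∂P) - (∫ ω, Z ω ∂P) ^ 2 := by
  intro w
  have hw : w = fun u => ∫ ω, Z ω * signedLayer (Z ω) u ∂P :=
    funext (integral_mul_ite_le_eq_integral_mul_signedLayer hZint hZmean)
  rw [hw]
  exact ⟨(integrable_mul_signedLayer_prod hZint.1 hZ2).integral_prod_right,
    integral_integral_mul_signedLayer hZint.1 hZ2, by rw [hZmean]; ring⟩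

/-- Let `Z` be a real random variable with `E[Z] = 0` and
`E[Z²] < ∞`, and define the causal weight function
`ω(u) = Cov(1{Z ≥ u}, Z) = E[Z·1{Z ≥ u}]`.  Then `ω` is Lebesgue integrable on `ℝ` and
`∫_ℝ ω(u) du = E[Z²]` — which equals `Var(Z)` since `E[Z] = 0`; in particular, if
`Var(Z) = 1` the causal weights integrate to one. -/
theorem causal_weights_integrate_to_variance
    {Ω : Type*} [MeasurableSpace Ω] (P : Measure Ω) [IsProbabilityMeasure P]
    (Z : Ω → ℝ) (hZmeas : Measurable Z)
    (hZint : Integrable Z P)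
    (hZ2 : Integrable (fun ω => (Z ω) ^ 2) P)
    (hZmean : ∫ ω, Z ω ∂P = 0) :
    let w : ℝ → ℝ := fun u => ∫ ω, Z ω * (if u ≤ Z ω then (1 : ℝ) else 0) ∂P
    Integrable w (volume : Measure ℝ)
    ∧ (∫ u, w u ∂(volume : Measure ℝ)) = ∫ ω, (Z ω) ^ 2 ∂P
    ∧ (∫ ω, (Z ω) ^ 2 ∂P) = (∫ ω, (Z ω) ^ 2 ∂P) - (∫ ω, Z ω ∂P) ^ 2 :=
  causal_weights_integrate_to_variance_general P Z hZint hZ2 hZmean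
end
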